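/- arXiv:2002.07562 — 4 statements merged into one kernel-verified Lean document; each statement's English description precedes it below -/
import Mathlib

section
/- For every regular expression r, every symbol a ∈ Σ, and every word w ∈ Σ*, the word a·w belongs to L(r) if and only if there exists a regular expression r' such that r —a→ r' and w ∈ L(r'). -/
open RegularExpression

/-- The acceptance predicate √ on regular expressions. -/
inductive Surd {α : Type} : RegularExpression α → Prop
  | eps : Surd 1
  | star (r : RegularExpression α) : Surd (RegularExpression.star r)
  | plusL {r₁ r₂ : RegularExpression α} : Surd r₁ → Surd (r₁ + r₂)
  | plusR {r₁ r₂ : RegularExpression α} : Surd r₂ → Surd (r₁ + r₂)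
  | comp {r₁ r₂ : RegularExpression α} : Surd r₁ → Surd r₂ → Surd (r₁ * r₂)

/-- The SOS transition relation r —a→ r'. -/
inductive Deriv {α : Type} : RegularExpression α → α → RegularExpression α → Prop
  | char (a : α) : Deriv (RegularExpression.char a) a 1
  | plusL {r₁ r₂ r₁' : RegularExpression α} {a : α} :
      Deriv r₁ a r₁' → Deriv (r₁ + r₂) a r₁'
  | plusR {r₁ r₂ r₂' : RegularExpression α} {a : α} :
      Deriv r₂ a r₂' → Deriv (r₁ + r₂) a r₂'
  | compL {r₁ r₂ r₁' : RegularExpression α} {a : α} :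
      Deriv r₁ a r₁' → Deriv (r₁ * r₂) a (r₁' * r₂)
  | compR {r₁ r₂ r₂' : RegularExpression α} {a : α} :
      Surd r₁ → Deriv r₂ a r₂' → Deriv (r₁ * r₂) a r₂'
  | star {r r'' : RegularExpression α} {a : α} :
      Deriv r a r'' → Deriv (RegularExpression.star r) a (r'' * RegularExpression.star r)

/-- Multi-step transitions labelled by a word. -/
inductive Derivs {α : Type} : RegularExpression α → List α → RegularExpression α → Prop
  | nil (r : RegularExpression α) : Derivs r [] r
  | cons {r r' r'' : RegularExpression α} {a : α} {w : List α} :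
      Deriv r a r' → Derivs r' w r'' → Derivs r (a :: w) r''

/-- The reachability set RS(r). -/
def RS {α : Type} (r : RegularExpression α) : Set (RegularExpression α) :=
  {r' | Relation.ReflTransGen (fun s t => ∃ a, Deriv s a t) r r'}

/-- Syntactic size of a regular expression. -/
def rsize {α : Type} : RegularExpression α → ℕ
  | RegularExpression.zero => 1
  | RegularExpression.epsilon => 1
  | RegularExpression.char _ => 1
  | RegularExpression.plus r₁ r₂ => rsize r₁ + rsize r₂ + 1
  | RegularExpression.comp r₁ r₂ => rsize r₁ + rsize r₂ + 1
  | RegularExpression.star r => rsize r + 1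

/-!
Soundness of a transition is an induction on its derivation, completeness an induction on `r`.
Both reduce to splitting a word `a :: w` of `L * M` or `L∗` at its first letter: in `L * M` the
letter comes from `L`, or `L` contributes the empty word and the letter comes from `M`, which is
where `√` enters, as the syntactic form of `[] ∈ L(r)`; in `L∗` it comes from a first nonempty
factor, leaving a word of `L · L∗`, the language of `r'' · r∗`.
-/

namespace Language

open scoped Computability

variable {α : Type*} {l m : Language α} {a : α} {w : List α}

theorem cons_mem_mul_iff :
    a :: w ∈ l * m ↔ ([] ∈ l ∧ a :: w ∈ m) ∨ ∃ x y, a :: x ∈ l ∧ y ∈ m ∧ x ++ y = w := by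
  constructor
  · rw [mem_mul]
    rintro ⟨_ | ⟨b, x⟩, hx, y, hy, hxy⟩
    · rw [List.nil_append] at hxy
      exact .inl ⟨hx, hxy ▸ hy⟩
    · obtain ⟨rfl, rfl⟩ := List.cons_eq_cons.mp hxy
      exact .inr ⟨x, y, hx, hy, rfl⟩
  · rintro (⟨hnil, hw⟩ | ⟨x, y, hx, hy, rfl⟩)
    · simpa using append_mem_mul hnil hw
    · exact append_mem_mul hx hy

theorem cons_mem_kstar_iff : a :: w ∈ l∗ ↔ ∃ x y, a :: x ∈ l ∧ y ∈ l∗ ∧ x ++ y = w := by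
  constructor
  · rw [mem_kstar_iff_exists_nonempty]
    rintro ⟨_ | ⟨_ | ⟨b, x⟩, L⟩, hL, hl⟩
    · simp at hL
    · exact absurd rfl (hl [] List.mem_cons_self).2
    · obtain ⟨rfl, rfl⟩ := List.cons_eq_cons.mp hL.symm
      exact ⟨x, L.flatten, (hl _ List.mem_cons_self).1,
        join_mem_kstar fun y hy => (hl y (List.mem_cons_of_mem _ hy)).1, rfl⟩
  · rintro ⟨x, y, hx, hy, rfl⟩
    rw [← one_add_self_mul_kstar_eq_kstar]
    exact .inr (append_mem_mul hx hy)

end Language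

open Language

variable {α : Type} {r r' : RegularExpression α} {a : α} {w : List α}

theorem surd_iff_nil_mem_matches' : Surd r ↔ [] ∈ r.matches' := by
  constructor
  · intro h
    induction h with
    | eps => exact nil_mem_one
    | star r => exact nil_mem_kstar _
    | plusL _ ih => exact .inl ih
    | plusR _ ih => exact .inr ih
    | comp _ _ ih₁ ih₂ => exact append_mem_mul ih₁ ih₂
  · intro h
    induction r with
    | zero => exact absurd h (Set.notMem_empty _)
    | epsilon => exact .eps
    | char b => exact absurd (h : [] = [b]).symm (List.cons_ne_nil b [])
    | plus r₁ r₂ ih₁ ih₂ => exact h.elim (.plusL ∘ ih₁) (.plusR ∘ ih₂)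
    | comp r₁ r₂ ih₁ ih₂ =>
      obtain ⟨x, hx, y, hy, hxy⟩ := mem_mul.mp h
      obtain ⟨rfl, rfl⟩ := List.append_eq_nil_iff.mp hxy
      exact .comp (ih₁ hx) (ih₂ hy)
    | star r => exact .star r

theorem Deriv.cons_mem_matches' (h : Deriv r a r') (hw : w ∈ r'.matches') :
    a :: w ∈ r.matches' := by
  induction h generalizing w with
  | char a => exact (mem_one w).mp hw ▸ rfl
  | plusL _ ih => exact .inl (ih hw)
  | plusR _ ih => exact .inr (ih hw)
  | compL _ ih =>
    obtain ⟨x, hx, y, hy, rfl⟩ := mem_mul.mp hw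
    exact append_mem_mul (ih hx) hy
  | compR hs _ ih =>
    exact cons_mem_mul_iff.mpr (.inl ⟨surd_iff_nil_mem_matches'.mp hs, ih hw⟩)
  | star _ ih =>
    obtain ⟨x, hx, y, hy, rfl⟩ := mem_mul.mp hw
    exact cons_mem_kstar_iff.mpr ⟨x, y, ih hx, hy, rfl⟩

theorem exists_deriv_of_cons_mem_matches' (h : a :: w ∈ r.matches') :
    ∃ r', Deriv r a r' ∧ w ∈ r'.matches' := by
  induction r generalizing w with
  | zero => exact absurd h (Set.notMem_empty _)
  | epsilon => exact absurd h (by simp)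
  | char b =>
    obtain ⟨rfl, rfl⟩ := List.cons_eq_cons.mp (h : a :: w = [b])
    exact ⟨1, .char a, nil_mem_one⟩
  | plus r₁ r₂ ih₁ ih₂ =>
    rcases h with h | h
    · obtain ⟨r', hd, hw⟩ := ih₁ h
      exact ⟨r', .plusL hd, hw⟩
    · obtain ⟨r', hd, hw⟩ := ih₂ h
      exact ⟨r', .plusR hd, hw⟩
  | comp r₁ r₂ ih₁ ih₂ =>
    rcases cons_mem_mul_iff.mp h with ⟨hnil, h₂⟩ | ⟨x, y, hx, hy, rfl⟩
    · obtain ⟨r', hd, hw⟩ := ih₂ h₂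
      exact ⟨r', .compR (surd_iff_nil_mem_matches'.mpr hnil) hd, hw⟩
    · obtain ⟨r', hd, hw⟩ := ih₁ hx
      exact ⟨r' * r₂, .compL hd, append_mem_mul hw hy⟩
  | star r ih =>
    obtain ⟨x, y, hx, hy, rfl⟩ := cons_mem_kstar_iff.mp h
    obtain ⟨r', hd, hw⟩ := ih hx
    exact ⟨r' * r.star, .star hd, append_mem_mul hw hy⟩

theorem cons_mem_iff_deriv {α : Type} (r : RegularExpression α) (a : α) (w : List α) :
    (a :: w) ∈ r.matches' ↔ ∃ r', Deriv r a r' ∧ w ∈ r'.matches' :=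
  ⟨exists_deriv_of_cons_mem_matches', fun ⟨_, hd, hw⟩ => hd.cons_mem_matches' hw⟩
end

section
/- For every regular expression r, the set RS(r) of regular expressions reachable from r via the SOS transition relation is finite, and in fact |RS(r)| ≤ |r| + 1, where |r| is the size (number of syntactic constructors) of r. -/
open RegularExpression

/-!
Every expression reachable from `r` in at least one step is one of Antimirov's partial derivatives
of `r`: this set is closed under transitions, and by its recursive definition each constructor of
`r` contributes at most one element to it. Adding `r` itself gives `|RS(r)| ≤ |r| + 1`.
-/

def partialDerivs {α : Type} : RegularExpression α → Set (RegularExpression α)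
  | RegularExpression.zero => ∅
  | RegularExpression.epsilon => ∅
  | RegularExpression.char _ => {1}
  | RegularExpression.plus r₁ r₂ => partialDerivs r₁ ∪ partialDerivs r₂
  | RegularExpression.comp r₁ r₂ => (· * r₂) '' partialDerivs r₁ ∪ partialDerivs r₂
  | RegularExpression.star r => (· * RegularExpression.star r) '' partialDerivs r

theorem encard_partialDerivs_le {α : Type} (r : RegularExpression α) :
    (partialDerivs r).encard ≤ rsize r := by
  induction r with
  | zero | epsilon | char => simp [partialDerivs, rsize]
  | plus r₁ r₂ ih₁ ih₂ =>
    calc (partialDerivs r₁ ∪ partialDerivs r₂).encard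
        ≤ (partialDerivs r₁).encard + (partialDerivs r₂).encard := Set.encard_union_le _ _
      _ ≤ rsize r₁ + rsize r₂ := add_le_add ih₁ ih₂
      _ ≤ rsize (r₁ + r₂) := by norm_cast; simp [rsize]
  | comp r₁ r₂ ih₁ ih₂ =>
    calc ((· * r₂) '' partialDerivs r₁ ∪ partialDerivs r₂).encard
        ≤ ((· * r₂) '' partialDerivs r₁).encard + (partialDerivs r₂).encard :=
          Set.encard_union_le _ _
      _ ≤ rsize r₁ + rsize r₂ := add_le_add ((Set.encard_image_le _ _).trans ih₁) ih₂
      _ ≤ rsize (r₁ * r₂) := by norm_cast; simp [rsize]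
  | star r ih =>
    calc ((· * r.star) '' partialDerivs r).encard ≤ rsize r := (Set.encard_image_le _ _).trans ih
      _ ≤ rsize r.star := by norm_cast; simp [rsize]

theorem Deriv.mem_partialDerivs {α : Type} {r r' : RegularExpression α} {a : α}
    (h : Deriv r a r') : r' ∈ partialDerivs r := by
  induction h with
  | char => rfl
  | plusL _ ih => exact Or.inl ih
  | plusR _ ih => exact Or.inr ih
  | compL _ ih => exact Or.inl ⟨_, ih, rfl⟩
  | compR _ _ ih => exact Or.inr ih
  | star _ ih => exact ⟨_, ih, rfl⟩

theorem Deriv.mem_partialDerivs_of_mem {α : Type} {r s t : RegularExpression α} {a : α}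
    (hs : s ∈ partialDerivs r) (h : Deriv s a t) : t ∈ partialDerivs r := by
  induction r generalizing s t with
  | zero | epsilon => exact hs.elim
  | char =>
    rw [partialDerivs, Set.mem_singleton_iff] at hs
    subst hs
    cases h
  | plus r₁ r₂ ih₁ ih₂ => exact hs.imp (ih₁ · h) (ih₂ · h)
  | comp r₁ r₂ ih₁ ih₂ =>
    rcases hs with ⟨s₁, hs₁, rfl⟩ | hs₂
    · cases h with
      | compL h₁ => exact Or.inl ⟨_, ih₁ hs₁ h₁, rfl⟩
      | compR _ h₂ => exact Or.inr h₂.mem_partialDerivs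
    · exact Or.inr (ih₂ hs₂ h)
  | star r ih =>
    obtain ⟨s₁, hs₁, rfl⟩ := hs
    cases h with
    | compL h₁ => exact ⟨_, ih hs₁ h₁, rfl⟩
    -- the only other move of `s₁ * r*` is a fresh unfolding of `r*`
    | compR _ h₂ =>
      cases h₂ with
      | star h₃ => exact ⟨_, h₃.mem_partialDerivs, rfl⟩

theorem RS_subset_insert_partialDerivs {α : Type} (r : RegularExpression α) :
    RS r ⊆ insert r (partialDerivs r) := by
  intro t ht
  induction ht with
  | refl => exact Set.mem_insert r _
  | tail _ hst ih =>
    obtain ⟨a, hst⟩ := hst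
    refine Set.mem_insert_of_mem r ?_
    rcases ih with rfl | hs
    · exact hst.mem_partialDerivs
    · exact hst.mem_partialDerivs_of_mem hs

theorem encard_RS_le {α : Type} (r : RegularExpression α) : (RS r).encard ≤ rsize r + 1 :=
  calc (RS r).encard ≤ (insert r (partialDerivs r)).encard :=
        Set.encard_le_encard (RS_subset_insert_partialDerivs r)
    _ ≤ (partialDerivs r).encard + 1 := Set.encard_insert_le _ _
    _ ≤ rsize r + 1 := by gcongr; exact encard_partialDerivs_le r

theorem RS_finite_card_le {α : Type} (r : RegularExpression α) :
    (RS r).Finite ∧ (RS r).ncard ≤ rsize r + 1 := by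
  have hcard : (RS r).encard ≤ ((rsize r + 1 : ℕ) : ℕ∞) := mod_cast encard_RS_le r
  have hfin : (RS r).Finite := Set.finite_of_encard_le_coe hcard
  refine ⟨hfin, ?_⟩
  rwa [← hfin.cast_ncard_eq, Nat.cast_le] at hcard
end

section
/- For regular expressions r₁, r₂, the reachability set of r₁·r₂ satisfies RS(r₁·r₂) ⊆ { r₁'·r₂ : r₁' ∈ RS(r₁) } ∪ RS(r₂). -/
open RegularExpression

theorem RS_subset_of_isClosed {α : Type} {r : RegularExpression α} {S : Set (RegularExpression α)}
    (hr : r ∈ S) (hS : ∀ s ∈ S, ∀ a t, Deriv s a t → t ∈ S) : RS r ⊆ S := by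
  intro t ht
  induction ht with
  | refl => exact hr
  | tail _ hst ih =>
    obtain ⟨a, hst⟩ := hst
    exact hS _ ih a _ hst

theorem self_mem_RS {α : Type} (r : RegularExpression α) : r ∈ RS r :=
  Relation.ReflTransGen.refl

theorem mem_RS_of_deriv {α : Type} {r t : RegularExpression α} {a : α} (h : Deriv r a t) :
    t ∈ RS r :=
  Relation.ReflTransGen.single ⟨a, h⟩

theorem mem_RS_of_mem_of_deriv {α : Type} {r s t : RegularExpression α} {a : α}
    (hs : s ∈ RS r) (h : Deriv s a t) : t ∈ RS r :=
  Relation.ReflTransGen.tail hs ⟨a, h⟩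

theorem deriv_mul_iff {α : Type} {r₁ r₂ t : RegularExpression α} {a : α} :
    Deriv (r₁ * r₂) a t ↔
      (∃ r₁', Deriv r₁ a r₁' ∧ t = r₁' * r₂) ∨ (Surd r₁ ∧ Deriv r₂ a t) := by
  constructor
  · rintro (_ | _ | _ | ⟨h⟩ | ⟨hs, h⟩ | _)
    · exact Or.inl ⟨_, h, rfl⟩
    · exact Or.inr ⟨hs, h⟩
  · rintro (⟨r₁', h, rfl⟩ | ⟨hs, h⟩)
    · exact Deriv.compL h
    · exact Deriv.compR hs h

theorem RS_comp_subset {α : Type} (r₁ r₂ : RegularExpression α) :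
    RS (r₁ * r₂) ⊆ {s | ∃ r₁' ∈ RS r₁, s = r₁' * r₂} ∪ RS r₂ := by
  refine RS_subset_of_isClosed (Or.inl ⟨r₁, self_mem_RS r₁, rfl⟩) ?_
  rintro s (⟨r₁', hr₁', rfl⟩ | hs) a t hst
  · rcases deriv_mul_iff.mp hst with ⟨r₁'', h, rfl⟩ | ⟨-, h⟩
    · exact Or.inl ⟨r₁'', mem_RS_of_mem_of_deriv hr₁' h, rfl⟩
    · exact Or.inr (mem_RS_of_deriv h)
  · exact Or.inr (mem_RS_of_mem_of_deriv hs hst)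
end

section
/- If r —a→ r' is an SOS transition between regular expressions, then L(r') ⊆ { w : a·w ∈ L(r) }, i.e., the 'target language' of any transition is contained in the Brzozowski derivative of L(r) with respect to a. -/
open RegularExpression

theorem Surd.nil_mem_matches' {α : Type} {r : RegularExpression α} (h : Surd r) :
    [] ∈ r.matches' := by
  induction h with
  | eps => rfl
  | star r => exact Language.nil_mem_kstar _
  | plusL _ ih => exact Or.inl ih
  | plusR _ ih => exact Or.inr ih
  | comp _ _ ih₁ ih₂ => exact ⟨[], ih₁, [], ih₂, rfl⟩

theorem Deriv.matches'_le_leftQuotient {α : Type} {r r' : RegularExpression α} {a : α}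
    (h : Deriv r a r') : r'.matches' ≤ r.matches'.leftQuotient [a] := by
  induction h with
  | char a => rintro w rfl; rfl
  | plusL _ ih => exact fun w hw => Or.inl (ih hw)
  | plusR _ ih => exact fun w hw => Or.inr (ih hw)
  | @compL _ _ _ a _ ih => rintro _ ⟨u, hu, v, hv, rfl⟩; exact ⟨a :: u, ih hu, v, hv, rfl⟩
  | @compR _ _ _ a hs _ ih => exact fun w hw => ⟨[], hs.nil_mem_matches', a :: w, ih hw, rfl⟩
  | @star s _ a _ ih =>
    rintro _ ⟨u, hu, v, hv, rfl⟩
    exact mul_kstar_le_kstar (a := s.matches') ⟨a :: u, ih hu, v, hv, rfl⟩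

theorem deriv_target_subset_derivative {α : Type} {r r' : RegularExpression α} {a : α}
    (h : Deriv r a r') :
    ∀ w : List α, w ∈ r'.matches' → (a :: w) ∈ r.matches' :=
  fun _ hw => h.matches'_le_leftQuotient hw
end
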